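/- arXiv:2002.00233 — 5 statements merged into one kernel-verified Lean document; each statement's English description precedes it below -/
import Mathlib

section
/- Let K be an algebraically closed field of characteristic zero (in the paper, K is the algebraic closure of the field ℚ_l of l-adic numbers). For every natural number n ≠ 2, the K-linear span of the special orthogonal group SO_n(K) = {A ∈ M_{n×n}(K) : Aᵀ·A = 1 and det A = 1} is the full matrix algebra M_{n×n}(K). -/
/-!
Since `SO_n` is a monoid, its span is the subalgebra it generates, so it suffices to produce every
matrix unit `Eᵢⱼ` from orthogonal matrices. For `n ≥ 3` and `2` invertible: the diagonal sign
matrix `Dᵢⱼ` flipping the signs at `i ≠ j` lies in `SO_n`, and `(1 - Dᵢⱼ)/2 = Eᵢᵢ + Eⱼⱼ`; taking a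
third index `k`, `Eᵢᵢ = (Eᵢᵢ + Eⱼⱼ)(Eᵢᵢ + Eₖₖ)`. As the alternating group is transitive, some even
permutation matrix `P` has `Pᵢⱼ = 1`, and then `Eᵢⱼ = Eᵢᵢ P Eⱼⱼ`. For `n ≤ 1` the only matrix unit
is `1`.
-/

open Matrix

-- Mathlib's `specialOrthogonalGroup` is the special unitary group for the trivial star.
attribute [local instance] starRingOfComm

namespace Matrix

variable {ι R : Type*} [Fintype ι] [DecidableEq ι] [CommRing R]

theorem diagonal_mem_specialOrthogonalGroup {d : ι → R} (hsq : d * d = 1)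
    (hprod : ∏ k, d k = 1) : diagonal d ∈ specialOrthogonalGroup ι R := by
  rw [mem_specialOrthogonalGroup_iff, mem_orthogonalGroup_iff', diagonal_transpose,
    diagonal_mul_diagonal, det_diagonal, hprod]
  exact ⟨by rw [← Pi.mul_def, hsq, diagonal_one'], rfl⟩

theorem permMatrix_mem_specialOrthogonalGroup {σ : Equiv.Perm ι} (hσ : σ ∈ alternatingGroup ι) :
    σ.permMatrix R ∈ specialOrthogonalGroup ι R := by
  rw [mem_specialOrthogonalGroup_iff, mem_orthogonalGroup_iff', transpose_permMatrix,
    ← permMatrix_mul, mul_inv_cancel, permMatrix_one, det_permutation,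
    Equiv.Perm.mem_alternatingGroup.1 hσ]
  exact ⟨rfl, by simp⟩

theorem single_mul_permMatrix_mul_single (σ : Equiv.Perm ι) (i : ι) :
    single i i (1 : R) * σ.permMatrix R * single (σ i) (σ i) 1 = single i (σ i) 1 := by
  simp [PEquiv.toMatrix_apply]

omit [Fintype ι] in
theorem smul_one_sub_diagonal_flip [Invertible (2 : R)] {i j : ι} (hij : i ≠ j) :
    (⅟2 : R) • (1 - diagonal fun k => if k = i ∨ k = j then (-1 : R) else 1) =
      single i i 1 + single j j 1 := by
  rw [← diagonal_single, ← diagonal_single, diagonal_add, ← diagonal_one', diagonal_sub,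
    ← diagonal_smul]
  congr 1
  ext k
  by_cases hi : k = i <;> by_cases hj : k = j <;> simp_all [one_add_one_eq_two]

local notation "𝒜" => Algebra.adjoin R (specialOrthogonalGroup ι R : Set (Matrix ι ι R))

theorem single_add_single_mem_adjoin_specialOrthogonalGroup [Invertible (2 : R)] {i j : ι}
    (hij : i ≠ j) : single i i 1 + single j j 1 ∈ 𝒜 := by
  rw [← smul_one_sub_diagonal_flip hij]
  refine Subalgebra.smul_mem _ (Subalgebra.sub_mem _ (Subalgebra.one_mem _)
    (Algebra.subset_adjoin (diagonal_mem_specialOrthogonalGroup ?_ ?_))) _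
  · ext k
    by_cases h : k = i ∨ k = j <;> simp [h]
  · rw [Finset.prod_eq_mul i j hij (fun k _ hk ↦ by simp [hk]) (by simp) (by simp)]
    simp

theorem single_mem_adjoin_specialOrthogonalGroup [Invertible (2 : R)]
    (h3 : 3 ≤ Fintype.card ι) (i j : ι) : single i j 1 ∈ 𝒜 := by
  have hdiag (i : ι) : single i i 1 ∈ 𝒜 := by
    have hcard : 1 < (Finset.univ.erase i).card := by
      rw [Finset.card_erase_of_mem (Finset.mem_univ _), Finset.card_univ]
      omega
    obtain ⟨j, hj, k, hk, hjk⟩ := Finset.one_lt_card.1 hcard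
    have hij := (Finset.ne_of_mem_erase hj).symm
    have hik := (Finset.ne_of_mem_erase hk).symm
    have : (single i i 1 + single j j 1) * (single i i 1 + single k k 1) = single i i (1 : R) := by
      simp [add_mul, mul_add, single_mul_single_of_ne, hij.symm, hik, hjk]
    exact this ▸ Subalgebra.mul_mem _ (single_add_single_mem_adjoin_specialOrthogonalGroup hij)
      (single_add_single_mem_adjoin_specialOrthogonalGroup hik)
  obtain ⟨⟨σ, hσ⟩, rfl⟩ := (alternatingGroup.isPretransitive_of_three_le_card ι
    (by rwa [Nat.card_eq_fintype_card])).exists_smul_eq i j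
  change single i (σ i) 1 ∈ 𝒜
  rw [← single_mul_permMatrix_mul_single]
  exact Subalgebra.mul_mem _ (Subalgebra.mul_mem _ (hdiag i)
    (Algebra.subset_adjoin (permMatrix_mem_specialOrthogonalGroup hσ))) (hdiag _)

omit [Fintype ι] in
theorem single_same_one_eq_one [Subsingleton ι] (i : ι) : single i i (1 : R) = 1 := by
  ext a b
  simp [one_apply, Subsingleton.elim a i, Subsingleton.elim b i]

theorem _root_.Subalgebra.eq_top_of_forall_single_mem (S : Subalgebra R (Matrix ι ι R))
    (h : ∀ i j, single i j 1 ∈ S) : S = ⊤ := by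
  refine eq_top_iff.2 fun A _ ↦ ?_
  rw [matrix_eq_sum_single A]
  refine S.sum_mem fun i _ ↦ S.sum_mem fun j _ ↦ ?_
  rw [← mul_one (A i j), ← smul_eq_mul, ← smul_single]
  exact S.smul_mem (h i j) _

theorem adjoin_specialOrthogonalGroup_eq_top [Invertible (2 : R)] (h : Fintype.card ι ≠ 2) :
    𝒜 = ⊤ := by
  refine Subalgebra.eq_top_of_forall_single_mem _ fun i j ↦ ?_
  rcases le_or_gt (Fintype.card ι) 1 with h1 | h3
  · have := Fintype.card_le_one_iff_subsingleton.1 h1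
    rw [Subsingleton.elim j i, single_same_one_eq_one]
    exact Subalgebra.one_mem _
  · exact single_mem_adjoin_specialOrthogonalGroup (by omega) i j

theorem span_specialOrthogonalGroup_eq_top [Invertible (2 : R)] (h : Fintype.card ι ≠ 2) :
    Submodule.span R (specialOrthogonalGroup ι R : Set (Matrix ι ι R)) = ⊤ := by
  rw [← Submonoid.closure_eq (specialOrthogonalGroup ι R), ← Algebra.adjoin_eq_span,
    adjoin_specialOrthogonalGroup_eq_top h, Algebra.top_toSubmodule]

end Matrix

theorem span_SO_eq_top_general (K : Type*) [Field K] [CharZero K]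
    (n : ℕ) (hn : n ≠ 2) :
    Submodule.span K
      {A : Matrix (Fin n) (Fin n) K | Aᵀ * A = 1 ∧ A.det = 1} = ⊤ := by
  have : Invertible (2 : K) := invertibleOfNonzero two_ne_zero
  have hSO : {A : Matrix (Fin n) (Fin n) K | Aᵀ * A = 1 ∧ A.det = 1} =
      specialOrthogonalGroup (Fin n) K := by
    ext A
    rw [SetLike.mem_coe, mem_specialOrthogonalGroup_iff, mem_orthogonalGroup_iff']
    rfl
  rw [hSO]
  exact span_specialOrthogonalGroup_eq_top (by rwa [Fintype.card_fin])

/-- **Sublemma 4.6 (span_On).** For an algebraically closed field `K` of characteristic zero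
and every natural number `n ≠ 2`, the `K`-linear span of
`SO_n(K) = {A | Aᵀ ⬝ A = 1 ∧ det A = 1}` is the full matrix algebra `M_{n×n}(K)`. -/
theorem span_SO_eq_top (K : Type*) [Field K] [IsAlgClosed K] [CharZero K]
    (n : ℕ) (hn : n ≠ 2) :
    Submodule.span K
      {A : Matrix (Fin n) (Fin n) K | Aᵀ * A = 1 ∧ A.det = 1} = ⊤ :=
  span_SO_eq_top_general K n hn
end

section
/- Let K be a field of characteristic zero and n a natural number. The K-linear span of the set {(A, (Aᵀ)⁻¹) : A ∈ GL_n(K)} inside M_{n×n}(K) × M_{n×n}(K) is the whole space M_{n×n}(K) × M_{n×n}(K). -/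
/-!
Over an infinite field the invertible matrices span all matrices: `M = c • 1 - (c • 1 - M)` for
any `c` that is not a root of the characteristic polynomial of `M`. For invertible `A`, both
`(A, (Aᵀ)⁻¹)` and `(2 • A, 2⁻¹ • (Aᵀ)⁻¹)` lie in the set, and since `2 ≠ 2⁻¹` in characteristic
zero, linear combinations of the two separate `(A, 0)` and `(0, (Aᵀ)⁻¹)`. As `A ↦ (Aᵀ)⁻¹` permutes
the invertible matrices, the span contains `(M, 0)` and `(0, M)` for every matrix `M`.
-/

open Matrix

namespace Matrix

variable {n K : Type*} [Fintype n] [DecidableEq n] [Field K]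

theorem exists_isUnit_det_scalar_sub [Infinite K] (M : Matrix n n K) :
    ∃ c : K, IsUnit (scalar n c - M).det := by
  obtain ⟨c, hc⟩ := M.charpoly.exists_eval_ne_zero_of_natDegree_lt_card (charpoly_monic M).ne_zero
    (Cardinal.natCast_lt_aleph0.trans_le (Cardinal.aleph0_le_mk K))
  exact ⟨c, isUnit_iff_ne_zero.mpr (eval_charpoly M c ▸ hc)⟩

theorem span_setOf_isUnit_det [Infinite K] :
    Submodule.span K {A : Matrix n n K | IsUnit A.det} = ⊤ := by
  refine Submodule.eq_top_iff'.mpr fun M => ?_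
  obtain ⟨c, hc⟩ := exists_isUnit_det_scalar_sub M
  have hscalar : scalar n c ∈ Submodule.span K {A : Matrix n n K | IsUnit A.det} := by
    rw [scalar_apply, ← smul_one_eq_diagonal]
    exact Submodule.smul_mem _ c (Submodule.subset_span (by simp))
  simpa using Submodule.sub_mem _ hscalar (Submodule.subset_span hc)

theorem inv_transpose_smul {A : Matrix n n K} (hA : IsUnit A.det) {c : K} (hc : c ≠ 0) :
    ((c • A)ᵀ)⁻¹ = c⁻¹ • (Aᵀ)⁻¹ := by
  have := invertibleOfNonzero hc
  rw [transpose_smul, ← invOf_eq_inv]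
  exact inv_smul _ c (isUnit_det_transpose A hA)

theorem inv_transpose_inv_transpose {A : Matrix n n K} (hA : IsUnit A.det) :
    (((Aᵀ)⁻¹)ᵀ)⁻¹ = A := by
  rw [transpose_nonsing_inv, transpose_transpose, nonsing_inv_nonsing_inv A hA]

end Matrix

theorem Submodule.mk_zero_mem_and_zero_mk_mem {K M N : Type*} [Field K] [AddCommGroup M]
    [Module K M] [AddCommGroup N] [Module K N] (p : Submodule K (M × N)) {x : M} {y : N}
    {c d : K} (hcd : c ≠ d) (h : (x, y) ∈ p) (hsmul : (c • x, d • y) ∈ p) :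
    (x, 0) ∈ p ∧ (0, y) ∈ p := by
  constructor
  · convert p.smul_mem (d - c)⁻¹ (p.sub_mem (p.smul_mem d h) hsmul) using 1
    ext <;> simp [smul_smul, ← sub_smul, inv_mul_cancel₀ (sub_ne_zero.mpr hcd.symm)]
  · convert p.smul_mem (c - d)⁻¹ (p.sub_mem (p.smul_mem c h) hsmul) using 1
    ext <;> simp [smul_smul, ← sub_smul, inv_mul_cancel₀ (sub_ne_zero.mpr hcd)]

/-- The spanning step in the CM case of Lemma 4.7 (span_algabg): over a field `K` of
characteristic zero, the `K`-linear span of the set of pairs `(A, (Aᵀ)⁻¹)` for `A ∈ GL_n(K)`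
is all of `M_{n×n}(K) × M_{n×n}(K)`. -/
theorem span_pairs_transpose_inverse_eq_top (K : Type*) [Field K] [CharZero K] (n : ℕ) :
    Submodule.span K
      {p : Matrix (Fin n) (Fin n) K × Matrix (Fin n) (Fin n) K |
        ∃ A : Matrix (Fin n) (Fin n) K, IsUnit A.det ∧ p = (A, (Aᵀ)⁻¹)} = ⊤ := by
  set S := {p : Matrix (Fin n) (Fin n) K × Matrix (Fin n) (Fin n) K |
    ∃ A : Matrix (Fin n) (Fin n) K, IsUnit A.det ∧ p = (A, (Aᵀ)⁻¹)}
  have hpair (A : Matrix (Fin n) (Fin n) K) (hA : IsUnit A.det) :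
      (A, 0) ∈ Submodule.span K S ∧ (0, (Aᵀ)⁻¹) ∈ Submodule.span K S := by
    refine Submodule.mk_zero_mem_and_zero_mk_mem _ (c := 2) (d := 2⁻¹) (by norm_num)
      (Submodule.subset_span ⟨A, hA, rfl⟩) (Submodule.subset_span ⟨(2 : K) • A, ?_, ?_⟩)
    · simpa [det_smul] using hA
    · rw [inv_transpose_smul hA two_ne_zero]
  have hrange (f : Matrix (Fin n) (Fin n) K →ₗ[K] _)
      (hf : ∀ A, IsUnit A.det → f A ∈ Submodule.span K S) :
      LinearMap.range f ≤ Submodule.span K S := by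
    rw [LinearMap.range_eq_map, ← span_setOf_isUnit_det, Submodule.map_span, Submodule.span_le]
    rintro _ ⟨A, hA, rfl⟩
    exact hf A hA
  rw [eq_top_iff, ← LinearMap.sup_range_inl_inr]
  refine sup_le (hrange _ fun A hA => (hpair A hA).1) (hrange _ fun B hB => ?_)
  have hB' : IsUnit ((Bᵀ)⁻¹).det := by simpa using hB
  simpa [inv_transpose_inv_transpose hB] using (hpair _ hB').2
end

section
/- Let p be a prime number with p ≡ 2 (mod 5) or p ≡ 3 (mod 5). Then for all v₀, v₁ ∈ F_p, the quintic polynomial P_{(v₀,v₁)} is a permutation polynomial of F_p, i.e. the map u ↦ P_{(v₀,v₁)}(u) is a bijection of F_p onto itself. -/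
/-!
Writing `P` in the variable `x = u + (v₁ - v₀) / 5`, which removes the `u⁴` term, exhibits it as a
translate of the Dickson polynomial `D₅(x, α) = x⁵ - 5αx³ + 5α²x`. Every `x ∈ F_p` can be written
`x = y + z` with `y z = α` and `y, z ∈ F_{p²}` (roots of `T² - xT + α`), and then
`D₅(x, α) = y⁵ + z⁵`. Since `5 ∤ p² - 1` when `p ≡ 2, 3 (mod 5)`, fifth powers are injective on
`F_{p²}`, and `y₁⁵ + z₁⁵ = y₂⁵ + z₂⁵`, `(y₁z₁)⁵ = (y₂z₂)⁵` force `{y₁⁵, z₁⁵} = {y₂⁵, z₂⁵}`,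
hence `{y₁, z₁} = {y₂, z₂}` and `x₁ = x₂`.
-/

/-- The quintic polynomial `P_{(v₀,v₁)}` from the proof of Lemma 6.4 of the paper,
defined over any field in which the displayed divisions by `5` and `25` make sense. -/
def Pquintic {K : Type*} [Field K] (v₀ v₁ u : K) : K :=
  u ^ 5 + (-v₀ + v₁) * u ^ 4
    + ((3 * v₀ ^ 2 - 6 * v₀ * v₁ - 2 * v₁ ^ 2) / 5) * u ^ 3
    + ((-v₀ ^ 3 + 3 * v₀ ^ 2 * v₁ - 2 * v₁ ^ 3) / 5) * u ^ 2
    + ((v₀ ^ 4 - 4 * v₀ ^ 3 * v₁ + v₀ ^ 2 * v₁ ^ 2 + 6 * v₀ * v₁ ^ 3 + v₁ ^ 4) / 25) * u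
    + (v₀ ^ 4 * v₁ + v₀ ^ 3 * v₁ ^ 2 + v₀ ^ 2 * v₁ ^ 3 + v₀ * v₁ ^ 4 + v₁ ^ 5) / 25

open Polynomial Function

theorem FiniteField.pow_injective_of_coprime {F : Type*} [Field F] [Finite F] {n : ℕ}
    (hn : n ≠ 0) (hcop : (Nat.card F - 1).Coprime n) : Injective fun x : F => x ^ n := by
  intro x y hxy
  simp only at hxy
  rcases eq_or_ne y 0 with rfl | hy
  · simpa [zero_pow hn, pow_eq_zero_iff hn] using hxy
  have hpow : (x / y) ^ n = 1 := by rw [div_pow, hxy, div_self (pow_ne_zero n hy)]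
  have hxy0 : x / y ≠ 0 := fun h => by simp [h, zero_pow hn] at hpow
  have hunit : Units.mk0 _ hxy0 = 1 :=
    (powCoprime (G := Fˣ) (by rwa [Nat.card_units])).injective <| by
      ext; simp [powCoprime, hpow]
  simpa [Units.ext_iff, div_eq_one_iff_eq hy] using hunit

theorem exists_aeval_eq_zero_of_natDegree_eq_two {F L : Type*} [Field F] [Field L] [Algebra F L]
    [Finite L] (hL : Module.finrank F L = 2) {g : F[X]} (hg : g.natDegree = 2) :
    ∃ y : L, aeval y g = 0 := by
  by_cases hirr : Irreducible g
  · have := Fact.mk hirr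
    obtain ⟨φ⟩ := FiniteField.nonempty_algHom_of_finrank_dvd (F := F) (K := AdjoinRoot g) (L := L)
      (by rw [(AdjoinRoot.powerBasis hirr.ne_zero).finrank, AdjoinRoot.powerBasis_dim, hg, hL])
    exact ⟨φ (AdjoinRoot.root g), by rw [aeval_algHom_apply, AdjoinRoot.aeval_eq,
      AdjoinRoot.mk_self, map_zero]⟩
  · obtain ⟨x, hx⟩ : ∃ x, g.IsRoot x := by
      by_contra! h
      exact hirr (irreducible_of_degree_le_three_of_not_isRoot (by simp [hg]) h)
    exact ⟨algebraMap F L x, by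
      rw [aeval_algebraMap_apply_eq_algebraMap_eval, hx.eq_zero, map_zero]⟩

theorem Polynomial.dickson_one_eval_add {R : Type*} [CommRing R] (x y : R) :
    ∀ n, (dickson 1 (x * y) n).eval (x + y) = x ^ n + y ^ n
  | 0 => by simp only [dickson_zero, pow_zero]; norm_num
  | 1 => by simp only [dickson_one, eval_X, pow_one]
  | n + 2 => by
    simp only [dickson_add_two, eval_sub, eval_mul, eval_X, eval_C, dickson_one_eval_add x y n,
      dickson_one_eval_add x y (n + 1)]
    ring

theorem Polynomial.dickson_one_eval_injective {F L : Type*} [Field F] [Field L] [Algebra F L]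
    [Finite L] (hL : Module.finrank F L = 2) {n : ℕ} (hn : n ≠ 0)
    (hcop : (Nat.card L - 1).Coprime n) (a : F) :
    Injective fun x : F => (dickson 1 a n).eval x := by
  have hpow := FiniteField.pow_injective_of_coprime hn hcop
  have hsplit (x : F) : ∃ y z : L, y * z = algebraMap F L a ∧ y + z = algebraMap F L x ∧
      algebraMap F L ((dickson 1 a n).eval x) = y ^ n + z ^ n := by
    obtain ⟨y, hy⟩ := exists_aeval_eq_zero_of_natDegree_eq_two hL
      (g := X ^ 2 - C x * X + C a) (by compute_degree!)
    have hyz : y * (algebraMap F L x - y) = algebraMap F L a := by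
      simp only [map_add, map_sub, map_mul, map_pow, aeval_X, aeval_C] at hy
      linear_combination -hy
    refine ⟨y, _, hyz, add_sub_cancel y _, ?_⟩
    rw [← eval₂_at_apply, ← eval_map, map_dickson, ← hyz, ← dickson_one_eval_add,
      add_sub_cancel]
  intro x₁ x₂ hx
  obtain ⟨y₁, z₁, hyz₁, hx₁, hD₁⟩ := hsplit x₁
  obtain ⟨y₂, z₂, hyz₂, hx₂, hD₂⟩ := hsplit x₂
  have hD : y₁ ^ n + z₁ ^ n = y₂ ^ n + z₂ ^ n := by
    rw [← hD₁, ← hD₂]; exact congrArg _ hx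
  have hprod : y₁ ^ n * z₁ ^ n = y₂ ^ n * z₂ ^ n := by
    rw [← mul_pow, ← mul_pow, hyz₁, hyz₂]
  apply (algebraMap F L).injective
  rw [← hx₁, ← hx₂]
  rcases mul_eq_zero.mp (show (y₁ ^ n - y₂ ^ n) * (y₁ ^ n - z₂ ^ n) = 0 by
    linear_combination y₁ ^ n * hD - hprod) with hy | hy
  · rw [hpow (sub_eq_zero.mp hy), hpow (show z₁ ^ n = z₂ ^ n by linear_combination hD - hy)]
  · rw [hpow (sub_eq_zero.mp hy), hpow (show z₁ ^ n = y₂ ^ n by linear_combination hD - hy),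
      add_comm]

theorem Polynomial.eval_dickson_one_five {R : Type*} [CommRing R] (a x : R) :
    (dickson 1 a 5).eval x = x ^ 5 - 5 * a * x ^ 3 + 5 * a ^ 2 * x := by
  simp only [dickson_add_two, dickson_one, dickson_zero, eval_sub, eval_mul, eval_X, eval_C]
  norm_num
  ring

theorem Pquintic_eq_eval_dickson {K : Type*} [Field K] (h5 : (5 : K) ≠ 0) (v₀ v₁ u : K) :
    Pquintic v₀ v₁ u =
      (dickson 1 ((4 * v₁ ^ 2 + 2 * v₀ * v₁ - v₀ ^ 2) / 25) 5).eval (u + (v₁ - v₀) / 5)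
        + (11 * v₀ ^ 5 + 70 * v₀ ^ 4 * v₁ + 160 * v₀ ^ 3 * v₁ ^ 2 + 240 * v₀ ^ 2 * v₁ ^ 3
            + 80 * v₀ * v₁ ^ 4 + 64 * v₁ ^ 5) / 3125 := by
  rw [eval_dickson_one_five, Pquintic, show (25 : K) = 5 ^ 2 by norm_num,
    show (3125 : K) = 5 ^ 5 by norm_num]
  field_simp
  ring

/-- **Sublemma 6.5 (perm_pol).** For a prime `p ≡ 2, 3 (mod 5)` and arbitrary
`v₀, v₁ ∈ F_p`, the quintic `P_{(v₀,v₁)}` is a permutation polynomial of `F_p`. -/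
theorem Pquintic_bijective (p : ℕ) [Fact p.Prime] (hp : p % 5 = 2 ∨ p % 5 = 3)
    (v₀ v₁ : ZMod p) :
    Function.Bijective (fun u : ZMod p => Pquintic v₀ v₁ u) := by
  have h5 : (5 : ZMod p) ≠ 0 := by
    rw [← Nat.cast_ofNat, Ne, ZMod.natCast_eq_zero_iff, Nat.dvd_prime Nat.prime_five]
    omega
  have hcop : (Nat.card (GaloisField p 2) - 1).Coprime 5 := by
    rw [GaloisField.card p 2 two_ne_zero, Nat.coprime_comm,
      Nat.Prime.coprime_iff_not_dvd Nat.prime_five]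
    have : p ^ 2 % 5 = 4 := by rw [Nat.pow_mod]; rcases hp with h | h <;> rw [h]
    omega
  have hD := dickson_one_eval_injective (GaloisField.finrank p two_ne_zero) (by norm_num) hcop
    ((4 * v₁ ^ 2 + 2 * v₀ * v₁ - v₀ ^ 2) / 25)
  refine Finite.injective_iff_bijective.mp fun u₁ u₂ h => ?_
  simp only [Pquintic_eq_eval_dickson h5, add_left_inj] at h
  exact add_right_cancel (hD h)
end

section
/- Let K be a field of characteristic different from 5 and v₀, v₁ ∈ K. Put α := (−v₀² + 2v₀v₁ + 4v₁²)/25 and C := P_{(v₀,v₁)}((v₀ − v₁)/5). Then for every u ∈ K one has P_{(v₀,v₁)}(u + (v₀ − v₁)/5) − C = u⁵ − 5αu³ + 5α²u. In other words, the normalised form of P_{(v₀,v₁)} is the Dickson polynomial g₅(u, α) = u⁵ − 5αu³ + 5α²u. -/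
/-- The computation in the proof of Sublemma 6.5 (perm_pol): over a field of characteristic
`≠ 5`, the normalised form of `P_{(v₀,v₁)}` is the Dickson polynomial
`g₅(u, α) = u⁵ − 5αu³ + 5α²u`, with `α = (−v₀² + 2v₀v₁ + 4v₁²)/25`. -/
theorem Pquintic_normalised_eq_dickson (K : Type*) [Field K] (hchar : ringChar K ≠ 5)
    (v₀ v₁ : K) (α C : K)
    (hα : α = (-v₀ ^ 2 + 2 * v₀ * v₁ + 4 * v₁ ^ 2) / 25)
    (hC : C = Pquintic v₀ v₁ ((v₀ - v₁) / 5)) :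
    ∀ u : K, Pquintic v₀ v₁ (u + (v₀ - v₁) / 5) - C
      = u ^ 5 - 5 * α * u ^ 3 + 5 * α ^ 2 * u := by
  have h5 : (5 : K) ≠ 0 := by
    exact_mod_cast CharP.cast_ne_zero_of_ne_of_prime K Nat.prime_five hchar
  have h25 : (25 : K) ≠ 0 := by
    simpa [show (25 : K) = 5 ^ 2 by norm_num] using h5
  intro u
  subst hα hC
  unfold Pquintic
  field_simp
  ring
end

section
/- Let p be a prime number with p ≡ 2 (mod 5) or p ≡ 3 (mod 5), and let v₀, v₁ ∈ F_p. Then the number of pairs (u, w) ∈ F_p² with w² = P_{(v₀,v₁)}(u) equals p. (Equivalently, the projective genus-2 curve C_{(v₀:v₁)} : w² = P_{(v₀,v₁)}(u) over F_p has exactly p + 1 rational points, exactly one of which lies at infinity.) -/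
open Polynomial Function Module

theorem Set.ncard_setOf_eq_of_bijective {α β γ : Type*} {f : α → γ} (hf : Bijective f)
    (g : β → γ) : {q : α × β | g q.2 = f q.1}.ncard = Nat.card β := by
  have hrange : {q : α × β | g q.2 = f q.1} =
      Set.range fun w => ((Equiv.ofBijective f hf).symm (g w), w) := by
    ext ⟨u, w⟩
    simp only [Set.mem_ofPred_eq, Set.mem_range, Prod.mk.injEq, exists_eq_right]
    rw [Equiv.symm_apply_eq, Equiv.ofBijective_apply]
  rw [hrange, Set.ncard_range_of_injective fun w w' h => congrArg Prod.snd h]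

theorem add_eq_add_of_pow_add_pow_eq {R : Type*} [CommRing R] [IsDomain R] {n : ℕ}
    (hn : Injective (· ^ n : R → R)) {s t s' t' : R} (hmul : s * t = s' * t')
    (hpow : s ^ n + t ^ n = s' ^ n + t' ^ n) : s + t = s' + t' := by
  have hprod : (s ^ n - s' ^ n) * (s ^ n - t' ^ n) = 0 := by
    linear_combination s ^ n * hpow - congrArg (· ^ n) hmul
  rcases mul_eq_zero.1 hprod with h | h
  · obtain rfl : s = s' := hn (sub_eq_zero.1 h)
    rw [hn (add_left_cancel hpow)]
  · obtain rfl : s = t' := hn (sub_eq_zero.1 h)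
    rw [hn (add_left_cancel (hpow.trans (add_comm _ _))), add_comm]

namespace Polynomial

theorem dickson_one_eval_add_s7 {R : Type*} [CommRing R] (x y : R) :
    ∀ n, (dickson 1 (x * y) n).eval (x + y) = x ^ n + y ^ n
  | 0 => by norm_num
  | 1 => by simp
  | n + 2 => by
    simp only [dickson_add_two, eval_sub, eval_mul, eval_X, eval_C, dickson_one_eval_add_s7 x y n,
      dickson_one_eval_add_s7 x y (n + 1)]
    ring

theorem eval_dickson_one_five_s7 {R : Type*} [CommRing R] (a x : R) :
    (dickson 1 a 5).eval x = x ^ 5 - 5 * a * x ^ 3 + 5 * a ^ 2 * x := by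
  simp only [dickson_add_two, Nat.reduceAdd, zero_add, dickson_one, dickson_zero, Nat.cast_one,
    eval_sub, eval_mul, eval_X, eval_C, eval_ofNat, eval_one]
  ring

end Polynomial

namespace FiniteField

theorem pow_injective_of_coprime_s7 {K : Type*} [Field K] [Finite K] {n : ℕ} (hn : n ≠ 0)
    (h : (Nat.card K - 1).Coprime n) : Injective (· ^ n : K → K) := by
  intro x y hxy
  simp only at hxy
  rcases eq_or_ne x 0 with rfl | hx
  · exact ((pow_eq_zero_iff hn).1 (hxy ▸ zero_pow hn)).symm
  rcases eq_or_ne y 0 with rfl | hy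
  · exact (pow_eq_zero_iff hn).1 (hxy.trans (zero_pow hn))
  have hunits := (Nat.card_units K ▸ h).pow_left_bijective.injective
    (a₁ := Units.mk0 x hx) (a₂ := Units.mk0 y hy) (Units.ext (by simpa using hxy))
  simpa using congrArg Units.val hunits

section

variable {K L : Type*} [Field K] [Field L] [Algebra K L] [Finite L]

theorem exists_aeval_eq_zero_of_natDegree_dvd_finrank {g : K[X]} (hg : Irreducible g)
    (h : g.natDegree ∣ finrank K L) : ∃ s : L, aeval s g = 0 := by
  have : Fact (Irreducible g) := ⟨hg⟩
  obtain ⟨φ⟩ := nonempty_algHom_of_finrank_dvd (F := K) (K := AdjoinRoot g) (L := L)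
    (by rwa [(AdjoinRoot.powerBasis hg.ne_zero).finrank, AdjoinRoot.powerBasis_dim])
  refine ⟨φ (AdjoinRoot.root g), ?_⟩
  rw [aeval_algHom_apply, AdjoinRoot.aeval_eq, AdjoinRoot.mk_self, map_zero]

theorem exists_add_eq_and_mul_eq (hL : 2 ∣ finrank K L) (x a : K) :
    ∃ s t : L, s + t = algebraMap K L x ∧ s * t = algebraMap K L a := by
  set f : K[X] := X ^ 2 - C x * X + C a
  have hf : f.natDegree = 2 := by unfold f; compute_degree!
  obtain ⟨g, hg, hgf⟩ := exists_irreducible_of_natDegree_pos (hf ▸ two_pos)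
  have hg2 : g.natDegree ∣ 2 := by
    have := natDegree_le_of_dvd hgf (ne_zero_of_natDegree_gt (hf ▸ one_lt_two))
    have := hg.natDegree_pos
    exact (Nat.dvd_prime Nat.prime_two).2 (by omega)
  obtain ⟨s, hs⟩ := exists_aeval_eq_zero_of_natDegree_dvd_finrank hg (hg2.trans hL)
  have hfs : aeval s f = 0 := by
    obtain ⟨q, hq⟩ := hgf
    rw [hq, map_mul, hs, zero_mul]
  refine ⟨s, algebraMap K L x - s, add_sub_cancel s _, ?_⟩
  simp only [f, map_add, map_sub, map_mul, map_pow, aeval_X, aeval_C] at hfs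
  linear_combination -hfs

theorem dickson_one_eval_injective (hL : 2 ∣ finrank K L) {n : ℕ}
    (hn : Injective (· ^ n : L → L)) (a : K) : Injective fun x => (dickson 1 a n).eval x := by
  intro x y hxy
  obtain ⟨s, t, hx, hst⟩ := exists_add_eq_and_mul_eq hL x a
  obtain ⟨s', t', hy, hst'⟩ := exists_add_eq_and_mul_eq hL y a
  have hD : ∀ z, algebraMap K L ((dickson 1 a n).eval z) =
      (dickson 1 (algebraMap K L a) n).eval (algebraMap K L z) := fun z => by
    rw [← map_dickson, eval_map, eval₂_at_apply]
  apply (algebraMap K L).injective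
  rw [← hx, ← hy]
  refine add_eq_add_of_pow_add_pow_eq hn (hst.trans hst'.symm) ?_
  rw [← dickson_one_eval_add_s7, ← dickson_one_eval_add_s7, hst, hst', hx, hy, ← hD, ← hD]
  exact congrArg _ hxy

end

end FiniteField

theorem pquintic_eq_eval_dickson {K : Type*} [Field K] (h5 : (5 : K) ≠ 0) (v₀ v₁ u : K) :
    Pquintic v₀ v₁ u =
      (dickson 1 (-(v₀ ^ 2 - 2 * v₀ * v₁ - 4 * v₁ ^ 2) / 25) 5).eval (u + (v₁ - v₀) / 5)
        + (11 * v₀ ^ 5 + 70 * v₀ ^ 4 * v₁ + 160 * v₀ ^ 3 * v₁ ^ 2 + 240 * v₀ ^ 2 * v₁ ^ 3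
          + 80 * v₀ * v₁ ^ 4 + 64 * v₁ ^ 5) / 3125 := by
  rw [eval_dickson_one_five_s7, Pquintic, show (25 : K) = 5 ^ 2 by norm_num,
    show (3125 : K) = 5 ^ 5 by norm_num]
  field_simp
  ring

theorem pquintic_injective (p : ℕ) [Fact p.Prime] (hp : p % 5 = 2 ∨ p % 5 = 3)
    (v₀ v₁ : ZMod p) : Injective (Pquintic v₀ v₁) := by
  have h5 : (5 : ZMod p) ≠ 0 := by
    intro h
    have hdvd : p ∣ 5 := (ZMod.natCast_eq_zero_iff 5 p).1 (by exact_mod_cast h)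
    have := (Nat.prime_dvd_prime_iff_eq Fact.out Nat.prime_five).1 hdvd
    omega
  have hcop : (Nat.card (GaloisField p 2) - 1).Coprime 5 := by
    rw [GaloisField.card p 2 two_ne_zero, Nat.coprime_comm,
      Nat.Prime.coprime_iff_not_dvd Nat.prime_five]
    have hsq := Nat.pow_mod p 2 5
    have := Nat.one_le_pow 2 p (Fact.out : p.Prime).pos
    rcases hp with hp | hp <;> rw [hp] at hsq <;> omega
  have hpow : Injective (· ^ 5 : GaloisField p 2 → GaloisField p 2) :=
    FiniteField.pow_injective_of_coprime_s7 (by norm_num) hcop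
  have hD := FiniteField.dickson_one_eval_injective
    (by rw [GaloisField.finrank p two_ne_zero]) hpow (-(v₀ ^ 2 - 2 * v₀ * v₁ - 4 * v₁ ^ 2) / 25)
  intro u u' h
  simp only [pquintic_eq_eval_dickson h5] at h
  simpa using hD (add_right_cancel h)

/-- Point count of the fibre curves in the proof of Lemma 6.4 (Qw5_count): for a prime
`p ≡ 2, 3 (mod 5)` and `v₀, v₁ ∈ F_p`, the number of pairs `(u, w) ∈ F_p²` with
`w² = P_{(v₀,v₁)}(u)` equals `p`. -/
theorem fibre_curve_point_count (p : ℕ) [Fact p.Prime] (hp : p % 5 = 2 ∨ p % 5 = 3)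
    (v₀ v₁ : ZMod p) :
    Set.ncard {q : ZMod p × ZMod p | q.2 ^ 2 = Pquintic v₀ v₁ q.1} = p :=
  (Set.ncard_setOf_eq_of_bijective (pquintic_injective p hp v₀ v₁).bijective_of_finite
    (· ^ 2)).trans (Nat.card_zmod p)
end
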